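/- Let n ≥ 2 and let Ẑ be the n×n matrix with top-left entry 1, first-row and first-column off-corner entries all equal to 1/n, and lower-right (n−1)×(n−1) block equal to (1/n)·I_{n−1}. Let W be the (n+1)×n matrix whose first column is the first standard basis vector e₀ ∈ ℝ^{n+1} and whose column k+1 (for k = 1, …, n−1) is the vector (0, 1, −e_kᵀ)ᵀ ∈ ℝ^{n+1} with e_k the k-th standard basis vector of ℝ^{n−1}. Then Ẑ is positive definite, and Ŷ := W Ẑ Wᵀ satisfies Ŷ₀₀ = 1, diag(Ŷ) ≥ Ŷ e₀, diag(Ŷ) ≥ −Ŷ e₀, and diag(Ŷ) ≤ 𝟙 componentwise, where Ŷ e₀ is the first column of Ŷ. -/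

import Mathlib

/-!
Writing `Ẑ = (1/(m+1)) • Lᴴ L`, where `L` is the identity with its first column filled with
ones, the quadratic form of `Ẑ` is `(a² + ∑ⱼ (a + xⱼ)²)/(m+1)`, and `Ẑ` is positive definite
because `L` is unimodular. The entries of `Ŷ` that matter are explicit: its first column is
`(1, m/(m+1), -1/(m+1), …)` and its diagonal `(1, m/(m+1), 1/(m+1), …)`.
-/

open Matrix

noncomputable def zHat (m : ℕ) : Matrix (Fin 1 ⊕ Fin m) (Fin 1 ⊕ Fin m) ℝ :=
  fromBlocks (of fun _ _ => 1) (of fun _ _ => 1 / (m + 1 : ℝ)) (of fun _ _ => 1 / (m + 1 : ℝ))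
    ((1 / (m + 1 : ℝ)) • 1)

def wHat (m : ℕ) : Matrix (Fin 1 ⊕ (Fin 1 ⊕ Fin m)) (Fin 1 ⊕ Fin m) ℝ :=
  fromBlocks 1 0 0 (fromRows (of fun _ _ => 1) (-1))

noncomputable def yHat (m : ℕ) :
    Matrix (Fin 1 ⊕ (Fin 1 ⊕ Fin m)) (Fin 1 ⊕ (Fin 1 ⊕ Fin m)) ℝ :=
  wHat m * zHat m * (wHat m)ᵀ

def firstColOnes (m : ℕ) : Matrix (Fin 1 ⊕ Fin m) (Fin 1 ⊕ Fin m) ℝ :=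
  fromBlocks 1 0 (of fun _ _ => 1) 1

section

variable (m : ℕ)

theorem det_firstColOnes : (firstColOnes m).det = 1 := by
  simp [firstColOnes]

theorem zHat_eq_smul_conjTranspose_mul_self :
    zHat m = (1 / (m + 1 : ℝ)) • ((firstColOnes m)ᴴ * firstColOnes m) := by
  have : (m + 1 : ℝ) ≠ 0 := by positivity
  ext (i | i) (j | j) <;>
    simp [zHat, firstColOnes, one_apply, mul_apply, Fin.fin_one_eq_zero, eq_comm]
  field_simp
  ring

theorem zHat_posDef : (zHat m).PosDef := by
  have hL : Function.Injective (firstColOnes m).mulVec := by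
    rw [mulVec_injective_iff_isUnit, isUnit_iff_isUnit_det, det_firstColOnes]
    exact isUnit_one
  rw [zHat_eq_smul_conjTranspose_mul_self]
  exact (PosDef.conjTranspose_mul_self _ hL).smul (by positivity)

open Sum

theorem yHat_inl_inl : yHat m (inl 0) (inl 0) = 1 := by
  simp [yHat, wHat, zHat, mul_apply, Fintype.sum_sum_type]

theorem yHat_inr_inl_inl : yHat m (inr (inl 0)) (inl 0) = m / (m + 1) := by
  simp [yHat, wHat, zHat, mul_apply, Fintype.sum_sum_type, div_eq_mul_inv]

theorem yHat_inr_inl_self : yHat m (inr (inl 0)) (inr (inl 0)) = m / (m + 1) := by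
  simp [yHat, wHat, zHat, mul_apply, Fintype.sum_sum_type, one_apply, div_eq_mul_inv]

theorem yHat_inr_inr_inl (j : Fin m) : yHat m (inr (inr j)) (inl 0) = -(1 / (m + 1)) := by
  simp [yHat, wHat, zHat, mul_apply, Fintype.sum_sum_type, one_apply]

theorem yHat_inr_inr_self (j : Fin m) : yHat m (inr (inr j)) (inr (inr j)) = 1 / (m + 1) := by
  simp [yHat, wHat, zHat, mul_apply, Fintype.sum_sum_type, one_apply]

theorem abs_yHat_apply_inl (i : Fin 1 ⊕ (Fin 1 ⊕ Fin m)) : |yHat m i (inl 0)| = yHat m i i := by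
  rcases i with i | i | j
  · rw [Fin.fin_one_eq_zero i, yHat_inl_inl, abs_one]
  · rw [Fin.fin_one_eq_zero i, yHat_inr_inl_inl, yHat_inr_inl_self, abs_of_nonneg (by positivity)]
  · rw [yHat_inr_inr_inl, yHat_inr_inr_self, abs_neg, abs_of_nonneg (by positivity)]

theorem yHat_diag_le_one (i : Fin 1 ⊕ (Fin 1 ⊕ Fin m)) : yHat m i i ≤ 1 := by
  have hpos : (0 : ℝ) < m + 1 := by positivity
  rcases i with i | i | j
  · rw [Fin.fin_one_eq_zero i, yHat_inl_inl]
  · rw [Fin.fin_one_eq_zero i, yHat_inr_inl_self, div_le_one hpos]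
    linarith
  · rw [yHat_inr_inr_self, div_le_one hpos]
    linarith [m.cast_nonneg (α := ℝ)]

end

theorem stmt_15 (m : ℕ)
    (Z : Matrix (Fin 1 ⊕ Fin m) (Fin 1 ⊕ Fin m) ℝ)
    (hZ : Z = Matrix.fromBlocks (Matrix.of fun _ _ => (1 : ℝ))
      (Matrix.of fun _ _ => 1 / (m + 1 : ℝ))
      (Matrix.of fun _ _ => 1 / (m + 1 : ℝ))
      ((1 / (m + 1 : ℝ)) • 1))
    (W : Matrix (Fin 1 ⊕ (Fin 1 ⊕ Fin m)) (Fin 1 ⊕ Fin m) ℝ)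
    (hW : W = Matrix.of fun i k =>
      match i, k with
      | Sum.inl _, Sum.inl _ => (1 : ℝ)
      | Sum.inl _, Sum.inr _ => 0
      | Sum.inr (Sum.inl _), Sum.inl _ => 0
      | Sum.inr (Sum.inl _), Sum.inr _ => 1
      | Sum.inr (Sum.inr _), Sum.inl _ => 0
      | Sum.inr (Sum.inr j), Sum.inr k => if j = k then -1 else 0)
    (Y : Matrix (Fin 1 ⊕ (Fin 1 ⊕ Fin m)) (Fin 1 ⊕ (Fin 1 ⊕ Fin m)) ℝ)
    (hY : Y = W * Z * Wᵀ) :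
    Z.PosDef ∧
    Y (Sum.inl 0) (Sum.inl 0) = 1 ∧
    (∀ i, Y i (Sum.inl 0) ≤ Y i i) ∧
    (∀ i, -(Y i (Sum.inl 0)) ≤ Y i i) ∧
    (∀ i, Y i i ≤ 1) := by
  obtain rfl : Z = zHat m := hZ
  obtain rfl : W = wHat m := by
    subst hW
    ext (i | i | i) (j | j) <;> simp [wHat, one_apply, neg_ite, Fin.fin_one_eq_zero]
  obtain rfl : Y = yHat m := hY
  exact ⟨zHat_posDef m, yHat_inl_inl m,
    fun i => (le_abs_self _).trans_eq (abs_yHat_apply_inl m i),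
    fun i => (neg_le_abs _).trans_eq (abs_yHat_apply_inl m i),
    yHat_diag_le_one m⟩
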